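/- Let D be a strongly connected tournament, let r be a reverse ray in D, and let v be a vertex of D not in the image of r. Then v can be inserted into r, i.e. there exist a reverse ray r' of D and natural numbers i, k such that r' n = r n for all n < i, r' (n + k) = r n for all n ≥ i, and v lies in the image of r'. -/

import Mathlib

/-!
If some `r i → v` with `v → r (i - 1)` (or `i = 0`), then `v` alone can be spliced into the ray
at position `i`. Otherwise, since `D` is a tournament, induction along the ray gives
`v → r n` for every `n`. Strong connectivity gives a walk from the ray to `v`; a shortest one,
`r j = p 0 → ⋯ → p n = v`, is injective and leaves the ray after its first vertex, so its
reversal can be spliced in at position `j`, the edge `v → r (j - 1)` closing the gap.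
-/

open Function Relation

section Walk

variable {α : Type*} {R : α → α → Prop}

def IsWalk (R : α → α → Prop) (p : ℕ → α) (n : ℕ) : Prop :=
  ∀ m < n, R (p m) (p (m + 1))

lemma exists_isWalk_of_reflTransGen {a b : α} (h : ReflTransGen R a b) :
    ∃ p n, IsWalk R p n ∧ p 0 = a ∧ p n = b := by
  induction h with
  | refl => exact ⟨fun _ => a, 0, fun m hm => absurd hm m.not_lt_zero, rfl, rfl⟩
  | @tail b c _ hbc ih =>
    obtain ⟨p, n, hp, hp0, hpn⟩ := ih
    refine ⟨fun m => if m ≤ n then p m else c, n + 1, fun m hm => ?_, by simpa using hp0,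
      by simp⟩
    rcases Nat.lt_succ_iff_lt_or_eq.mp hm with hm | rfl
    · simpa [hm.le, Nat.succ_le_of_lt hm] using hp m hm
    · simpa [hpn] using hbc

lemma IsWalk.drop {p : ℕ → α} {n : ℕ} (hp : IsWalk R p n) (b : ℕ) :
    IsWalk R (fun t => p (t + b)) (n - b) := fun m hm => by
  simpa [Nat.add_right_comm] using hp (m + b) (by omega)

lemma IsWalk.shortcut {p : ℕ → α} {n a b : ℕ} (hp : IsWalk R p n) (hab : a ≤ b)
    (hbn : b ≤ n) (heq : p a = p b) :
    IsWalk R (fun t => if t < a then p t else p (t + (b - a))) (n - (b - a)) := by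
  intro m hm
  by_cases hma : m + 1 < a
  · simpa [hma, show m < a by omega] using hp m (by omega)
  by_cases hm' : m < a
  · have hm1 : m + 1 = a := by omega
    simp only [hm', hma, if_true, if_false]
    rw [show m + 1 + (b - a) = b by omega, ← heq, ← hm1]
    exact hp m (by omega)
  · simp only [hm', hma, if_false]
    rw [show m + 1 + (b - a) = m + (b - a) + 1 by omega]
    exact hp _ (by omega)

/-- A shortest walk from `S` to `b` is injective and meets `S` only at its start. -/
lemma exists_injOn_isWalk_of_reflTransGen (S : Set α) {a b : α} (ha : a ∈ S)
    (h : ReflTransGen R a b) :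
    ∃ p n, IsWalk R p n ∧ p 0 ∈ S ∧ p n = b ∧ Set.InjOn p (Set.Iic n) ∧
      ∀ m, 0 < m → m ≤ n → p m ∉ S := by
  classical
  have hex : ∃ n p, IsWalk R p n ∧ p 0 ∈ S ∧ p n = b := by
    obtain ⟨p, n, hp, hp0, hpn⟩ := exists_isWalk_of_reflTransGen h
    exact ⟨n, p, hp, hp0 ▸ ha, hpn⟩
  obtain ⟨p, hp, hp0, hpn⟩ := Nat.find_spec hex
  set n := Nat.find hex
  refine ⟨p, n, hp, hp0, hpn, ?_, fun m hm hmn hmS => ?_⟩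
  · intro x hx y hy hxy
    by_contra hne
    wlog hlt : x < y generalizing x y
    · exact this hy hx hxy.symm (Ne.symm hne) (by omega)
    refine Nat.find_min hex (m := n - (y - x)) (by simp at hy; omega)
      ⟨_, hp.shortcut hlt.le hy hxy, ?_, ?_⟩
    · by_cases hx0 : 0 < x
      · simpa [hx0] using hp0
      · simpa [show x = 0 by omega, ← hxy] using hp0
    · simp only [show ¬ n - (y - x) < x by simp at hy; omega, if_false]
      rwa [show n - (y - x) + (y - x) = n by simp at hy; omega]
  · refine Nat.find_min hex (m := n - m) (by omega) ⟨_, hp.drop m, by simpa using hmS, ?_⟩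
    simpa [show n - m + m = n by omega] using hpn

end Walk

section ReverseRay

variable {V : Type*} {r c : ℕ → V} {i k : ℕ}

def splice (r c : ℕ → V) (i k n : ℕ) : V :=
  if n < i then r n else if n < i + k then c (n - i) else r (n - k)

lemma splice_of_lt {n : ℕ} (h : n < i) : splice r c i k n = r n := by
  simp [splice, h]

lemma splice_add_of_le {n : ℕ} (h : i ≤ n) : splice r c i k (n + k) = r n := by
  simp [splice, show ¬ n + k < i by omega, show ¬ n + k < i + k by omega]

lemma splice_add {m : ℕ} (h : m < k) : splice r c i k (i + m) = c m := by
  simp [splice, h]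

lemma splice_injective (hr : Injective r) (hc : Set.InjOn c (Set.Iio k))
    (hcr : ∀ m < k, c m ∉ Set.range r) : Injective (splice r c i k) := by
  intro a b hab
  unfold splice at hab
  split_ifs at hab <;>
    first
    | have := hr hab; omega
    | exact absurd ⟨_, hab⟩ (hcr _ (by omega))
    | exact absurd ⟨_, hab.symm⟩ (hcr _ (by omega))
    | have := hc (by simp; omega) (by simp; omega) hab; omega

lemma splice_succ {E : V → V → Prop} (hr : ∀ n, E (r (n + 1)) (r n))
    (hc : ∀ m, m + 1 < k → E (c (m + 1)) (c m)) (hk : 0 < k)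
    (hbot : ∀ j, i = j + 1 → E (c 0) (r j)) (htop : E (r i) (c (k - 1))) (n : ℕ) :
    E (splice r c i k (n + 1)) (splice r c i k n) := by
  unfold splice
  split_ifs <;> try omega
  · exact hr n
  · rw [show n + 1 - i = 0 by omega]
    exact hbot n (by omega)
  · rw [show n + 1 - i = n - i + 1 by omega]
    exact hc _ (by omega)
  · rw [show n + 1 - k = i by omega, show n - i = k - 1 by omega]
    exact htop
  · rw [show n + 1 - k = n - k + 1 by omega]
    exact hr _

lemma exists_splice_reverseRay {E : V → V → Prop} (hr_inj : Injective r)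
    (hr : ∀ n, E (r (n + 1)) (r n)) (hc_inj : Set.InjOn c (Set.Iio k))
    (hcr : ∀ m < k, c m ∉ Set.range r) (hc : ∀ m, m + 1 < k → E (c (m + 1)) (c m))
    (hbot : ∀ j, i = j + 1 → E (c 0) (r j)) (htop : E (r i) (c (k - 1)))
    {v : V} {m : ℕ} (hm : m < k) (hcm : c m = v) :
    ∃ (r' : ℕ → V) (i k : ℕ),
      Injective r' ∧ (∀ n : ℕ, E (r' (n + 1)) (r' n)) ∧
      (∀ n : ℕ, n < i → r' n = r n) ∧
      (∀ n : ℕ, i ≤ n → r' (n + k) = r n) ∧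
      v ∈ Set.range r' :=
  ⟨splice r c i k, i, k, splice_injective hr_inj hc_inj hcr,
    splice_succ hr hc (by omega) hbot htop, fun _ => splice_of_lt, fun _ => splice_add_of_le,
    i + m, hcm ▸ splice_add hm⟩

lemma forall_rel_ray_of_forall_not_between {E : V → V → Prop} {v : V}
    (htot : ∀ n, E v (r n) ∨ E (r n) v)
    (h : ∀ i, E (r i) v → ∃ j, i = j + 1 ∧ ¬ E v (r j)) :
    ∀ n, E v (r n) := by
  intro n
  induction n with
  | zero => exact (htot 0).resolve_right fun h0 => by simpa using h 0 h0
  | succ n ih =>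
    refine (htot (n + 1)).resolve_right fun hn => ?_
    obtain ⟨j, hj, hnot⟩ := h _ hn
    exact hnot (Nat.succ_injective hj ▸ ih)

end ReverseRay

theorem stmt_1_general {V : Type*} (E : V → V → Prop)
    (h_tour : ∀ u v : V, u ≠ v → Xor' (E u v) (E v u))
    (h_sc : ∀ u v : V, Relation.ReflTransGen E u v)
    (r : ℕ → V) (h_inj : Function.Injective r)
    (h_ray : ∀ n : ℕ, E (r (n + 1)) (r n))
    (v : V) (hv : v ∉ Set.range r) :
    ∃ (r' : ℕ → V) (i k : ℕ),
      Function.Injective r' ∧ (∀ n : ℕ, E (r' (n + 1)) (r' n)) ∧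
      (∀ n : ℕ, n < i → r' n = r n) ∧
      (∀ n : ℕ, i ≤ n → r' (n + k) = r n) ∧
      v ∈ Set.range r' := by
  have hvr : ∀ n, v ≠ r n := fun n h => hv ⟨n, h.symm⟩
  by_cases hins : ∃ i, E (r i) v ∧ ∀ j, i = j + 1 → E v (r j)
  · obtain ⟨i, htop, hbot⟩ := hins
    exact exists_splice_reverseRay (c := fun _ => v) (k := 1) h_inj h_ray
      (fun a ha b hb _ => by simp at ha hb; omega) (fun _ _ => hv) (fun _ h => by omega)
      hbot htop Nat.one_pos rfl
  push Not at hins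
  have hv_ray : ∀ n, E v (r n) :=
    forall_rel_ray_of_forall_not_between (fun n => Xor.or (h_tour v (r n) (hvr n))) hins
  obtain ⟨p, n, hp, ⟨j, hj⟩, hpn, hp_inj, hp_off⟩ :=
    exists_injOn_isWalk_of_reflTransGen (Set.range r) ⟨0, rfl⟩ (h_sc (r 0) v)
  have hn : 0 < n := Nat.pos_of_ne_zero fun h => hv ⟨j, by rw [hj, ← hpn, h]⟩
  refine exists_splice_reverseRay (c := fun m => p (n - m)) (k := n) (i := j) h_inj h_ray
    (fun a ha b hb hab => ?_) (fun m hm => hp_off _ (by omega) (by omega))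
    (fun m hm => ?_) (fun _ _ => by simpa [hpn] using hv_ray _) ?_ hn (by simpa using hpn)
  · have := hp_inj (by simp) (by simp) hab
    simp at ha hb
    omega
  · simpa [show n - m = n - (m + 1) + 1 by omega] using hp _ (by omega)
  · simpa [hj, show n - (n - 1) = 1 by omega] using hp 0 hn

theorem stmt_1 {V : Type*} (E : V → V → Prop)
    (h_irr : ∀ v : V, ¬ E v v)
    (h_tour : ∀ u v : V, u ≠ v → Xor' (E u v) (E v u))
    (h_sc : ∀ u v : V, Relation.ReflTransGen E u v)
    (r : ℕ → V) (h_inj : Function.Injective r)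
    (h_ray : ∀ n : ℕ, E (r (n + 1)) (r n))
    (v : V) (hv : v ∉ Set.range r) :
    ∃ (r' : ℕ → V) (i k : ℕ),
      Function.Injective r' ∧ (∀ n : ℕ, E (r' (n + 1)) (r' n)) ∧
      (∀ n : ℕ, n < i → r' n = r n) ∧
      (∀ n : ℕ, i ≤ n → r' (n + k) = r n) ∧
      v ∈ Set.range r' :=
  stmt_1_general E h_tour h_sc r h_inj h_ray v hv
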